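/- For all n ≥ 1 and m ≥ 1, the set ⟦⟨q0, s_{n,m}⟩⟧_OI of outputs of the mtt M_sat in OI-mode on input s_{n,m} equals the set { enc(φ) | φ is a satisfiable 3-CNF formula over the variables p_0,…,p_{n−1} with exactly m clauses }. -/

import Mathlib

/-!
In OI mode every occurrence of a parameter is evaluated independently, so the semantics is
compositional on sets: `⟦⟨q, σ(s⃗)⟩(u₁, …, uₘ)⟧ = ⋃ᵣ ⟦r[x⃗ := s⃗]⟧ ←_OI (⟦u₁⟧, …, ⟦uₘ⟧)`, and
`←_OI` commutes with unions and with building output nodes `δ(L₁, …, Lₙ)`. The outputs of `M_sat`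
can therefore be computed as set expressions.

Along the spine of `s_{n,m}` the parameter `y_v` holds `v^i(e)`, the encoding of the current
variable `p_i`. The `a`-rules and `b`-rules guess a truth value for `p_i` and add the literal of
`p_i` that it makes true to the pool `y_t` and the other one to the pool `y_f` (a call
`⟨q_c, d⟩(u₁, u₂)` denotes `⟦u₁⟧ ∪ ⟦u₂⟧`). Then `⟨q, c^{m-1}(d)⟩` emits a right-nested conjunction
of `m` clauses, each of whose literals is drawn independently from a pool, with at least one from
`y_t`. So, for each guessed assignment, the outputs are the encodings of the `m`-clause formulas
over `p_0, …, p_{n-1}` that it satisfies.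
-/

namespace MttF

/-- Finite ordered trees over a label type `α`. -/
inductive RTree (α : Type) : Type
  | node : α → List (RTree α) → RTree α

namespace RTree

variable {α β : Type}

/-- The root label of a tree. -/
def label : RTree α → α
  | node a _ => a

/-- The list of immediate subtrees of a tree. -/
def children : RTree α → List (RTree α)
  | node _ ts => ts

/-- Relabelling of trees. -/
def map (f : α → β) : RTree α → RTree β
  | node a ts => node (f a) (ts.attach.map (fun x => map f x.1))
decreasing_by
  have := List.sizeOf_lt_of_mem x.2
  simp only [node.sizeOf_spec]
  omega

/-- A tree is well-formed with respect to a rank function if every node labeled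
by a rank-`k` symbol has exactly `k` children. `T_Σ` is the set of well-formed
trees over `Σ`. -/
inductive Wf (rk : α → ℕ) : RTree α → Prop
  | node {a : α} {ts : List (RTree α)} :
      ts.length = rk a → (∀ t ∈ ts, Wf rk t) → Wf rk (node a ts)

/-- `Subtree u t` holds iff `u` is a subtree of `t` (rooted at some node of `t`). -/
inductive Subtree : RTree α → RTree α → Prop
  | refl (t : RTree α) : Subtree t t
  | step {u c : RTree α} {a : α} {ts : List (RTree α)} :
      c ∈ ts → Subtree u c → Subtree u (node a ts)

end RTree

/-- Labels for output trees with parameters: trees over `Δ ∪ Y`. -/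
inductive OLab (Δ : Type) : Type
  | out (d : Δ)
  | param (i : ℕ)

/-- Labels for right-hand sides of mtt rules: trees over `Δ ∪ (Q × X) ∪ Y`
(the second component of a call is the index of the input variable `x`). -/
inductive RLab (Δ Q : Type) : Type
  | out (d : Δ)
  | call (q : Q) (x : ℕ)
  | param (i : ℕ)

/-- Labels for "semantic" trees over `Δ ∪ (Q × T_Σ) ∪ Y`. -/
inductive SLab (Γ Δ Q : Type) : Type
  | out (d : Δ)
  | call (q : Q) (s : RTree Γ)
  | param (i : ℕ)

/-- Trees over `Δ ∪ Y`. -/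
abbrev OT (Δ : Type) := RTree (OLab Δ)
/-- Right-hand side trees over `Δ ∪ (Q × X) ∪ Y`. -/
abbrev Rhs (Δ Q : Type) := RTree (RLab Δ Q)
/-- Trees over `Δ ∪ (Q × T_Σ) ∪ Y`. -/
abbrev ST (Γ Δ Q : Type) := RTree (SLab Γ Δ Q)

/-- First-order substitution `x_i := ss_i` on a label of a right-hand side
(indices are 0-based; for well-formed rules the index is always in range). -/
def RLab.subst {Γ Δ Q : Type} (ss : List (RTree Γ)) : RLab Δ Q → SLab Γ Δ Q
  | .out d => .out d
  | .param i => .param i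
  | .call q x =>
    match ss[x]? with
    | some s => .call q s
    | none => .param x

/-- `r[x_1/s_1, …, x_k/s_k]`. -/
def substX {Γ Δ Q : Type} (ss : List (RTree Γ)) (r : Rhs Δ Q) : ST Γ Δ Q :=
  r.map (RLab.subst ss)

/-- Second-order (parameter) substitution `t[y_1/ts_1, …, y_n/ts_n]`
(`y` indices are 0-based). -/
def substY {Δ : Type} (ts : List (OT Δ)) : OT Δ → OT Δ
  | .node (.param i) _ => ts.getD i (.node (.param i) [])
  | .node (.out d) us => .node (.out d) (us.attach.map (fun x => substY ts x.1))
decreasing_by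
  have := List.sizeOf_lt_of_mem x.2
  simp only [RTree.node.sizeOf_spec]
  omega

/-- The embedding of `T_Δ` into the trees over `Δ ∪ Y`. -/
def embed {Δ : Type} (t : RTree Δ) : OT Δ := t.map OLab.out

variable {Γ Δ Q : Type}

/-- IO (call-by-value, inside-out) semantics: `SemIO rsel u t` holds iff
`t ∈ ⟦u⟧_IO`.  The rules of the transducer are given by a selector
`rsel q σ ss`: the set of right-hand sides of the `⟨q,σ⟩`-rules that are
applicable when the children of the current input node are `ss` (for a plain
mtt this does not depend on `ss`, cf. `plainSel`). -/
inductive SemIO (rsel : Q → Γ → List (RTree Γ) → Set (Rhs Δ Q)) :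
    ST Γ Δ Q → OT Δ → Prop
  | param (i : ℕ) :
      SemIO rsel (.node (.param i) []) (.node (.param i) [])
  | out {d : Δ} {us : List (ST Γ Δ Q)} {ts : List (OT Δ)}
      (hlen : ts.length = us.length)
      (h : ∀ i : Fin us.length, SemIO rsel (us.get i) (ts.get (i.cast hlen.symm))) :
      SemIO rsel (.node (.out d) us) (.node (.out d) ts)
  | call {q : Q} {σ : Γ} {ss : List (RTree Γ)} {us : List (ST Γ Δ Q)}
      {r : Rhs Δ Q} {t₀ : OT Δ} {ts : List (OT Δ)}
      (hr : r ∈ rsel q σ ss)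
      (h₀ : SemIO rsel (substX ss r) t₀)
      (hlen : ts.length = us.length)
      (h : ∀ i : Fin us.length, SemIO rsel (us.get i) (ts.get (i.cast hlen.symm))) :
      SemIO rsel (.node (.call q (.node σ ss)) us) (substY ts t₀)

mutual
/-- OI (call-by-name, outside-in) semantics: `SemOI rsel u t` holds iff
`t ∈ ⟦u⟧_OI`. -/
inductive SemOI (rsel : Q → Γ → List (RTree Γ) → Set (Rhs Δ Q)) :
    ST Γ Δ Q → OT Δ → Prop
  | param (i : ℕ) :
      SemOI rsel (.node (.param i) []) (.node (.param i) [])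
  | out {d : Δ} {us : List (ST Γ Δ Q)} {ts : List (OT Δ)}
      (hlen : ts.length = us.length)
      (h : ∀ i : Fin us.length, SemOI rsel (us.get i) (ts.get (i.cast hlen.symm))) :
      SemOI rsel (.node (.out d) us) (.node (.out d) ts)
  | call {q : Q} {σ : Γ} {ss : List (RTree Γ)} {us : List (ST Γ Δ Q)}
      {r : Rhs Δ Q} {t₀ : OT Δ} {t : OT Δ}
      (hr : r ∈ rsel q σ ss)
      (h₀ : SemOI rsel (substX ss r) t₀)
      (hs : OISub rsel us t₀ t) :
      SemOI rsel (.node (.call q (.node σ ss)) us) t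

/-- OI-substitution: `OISub rsel us t₀ t` holds iff `t ∈ (t₀ ←_OI (⟦us_1⟧_OI, …, ⟦us_n⟧_OI))`,
i.e. `t` is obtained from `t₀` by independently replacing every occurrence of a parameter
`y_i` by some member of `⟦us_i⟧_OI`. -/
inductive OISub (rsel : Q → Γ → List (RTree Γ) → Set (Rhs Δ Q)) :
    List (ST Γ Δ Q) → OT Δ → OT Δ → Prop
  | param {us : List (ST Γ Δ Q)} {i : ℕ} {t : OT Δ}
      (h : i < us.length) (hsem : SemOI rsel (us.get ⟨i, h⟩) t) :
      OISub rsel us (.node (.param i) []) t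
  | out {us : List (ST Γ Δ Q)} {d : Δ} {ts ts' : List (OT Δ)}
      (hlen : ts'.length = ts.length)
      (h : ∀ i : Fin ts.length, OISub rsel us (ts.get i) (ts'.get (i.cast hlen.symm))) :
      OISub rsel us (.node (.out d) ts) (.node (.out d) ts')
end

/-- The rule selector of a plain mtt: the applicable rules do not depend on the
child subtrees of the current input node. -/
def plainSel (rules : Q → Γ → Set (Rhs Δ Q)) :
    Q → Γ → List (RTree Γ) → Set (Rhs Δ Q) :=
  fun q σ _ => rules q σ

/-- The translation `τ_{IO,M} ⊆ T_Σ × T_Δ` realized in IO mode. -/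
def tauIO (rankΓ : Γ → ℕ) (rankΔ : Δ → ℕ)
    (rsel : Q → Γ → List (RTree Γ) → Set (Rhs Δ Q)) (q₀ : Q) :
    Set (RTree Γ × RTree Δ) :=
  {p | p.1.Wf rankΓ ∧ p.2.Wf rankΔ ∧
       SemIO rsel (.node (.call q₀ p.1) []) (embed p.2)}

/-- The translation `τ_{OI,M} ⊆ T_Σ × T_Δ` realized in OI mode. -/
def tauOI (rankΓ : Γ → ℕ) (rankΔ : Δ → ℕ)
    (rsel : Q → Γ → List (RTree Γ) → Set (Rhs Δ Q)) (q₀ : Q) :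
    Set (RTree Γ × RTree Δ) :=
  {p | p.1.Wf rankΓ ∧ p.2.Wf rankΔ ∧
       SemOI rsel (.node (.call q₀ p.1) []) (embed p.2)}

/-- Well-formedness of a right-hand side of a rule of an mtt whose current
input symbol has rank `k` and whose current state has rank `m`: output symbols
have the correct number of children, state calls `⟨q', x_i⟩` have `rank q'`
children and `i < k`, and parameters `y_j` satisfy `j < m`. -/
inductive RhsWf (rankΔ : Δ → ℕ) (rankQ : Q → ℕ) (k m : ℕ) : Rhs Δ Q → Prop
  | out {d : Δ} {ts : List (Rhs Δ Q)}
      (hlen : ts.length = rankΔ d) (h : ∀ t ∈ ts, RhsWf rankΔ rankQ k m t) :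
      RhsWf rankΔ rankQ k m (.node (.out d) ts)
  | call {q : Q} {x : ℕ} {ts : List (Rhs Δ Q)}
      (hx : x < k) (hlen : ts.length = rankQ q)
      (h : ∀ t ∈ ts, RhsWf rankΔ rankQ k m t) :
      RhsWf rankΔ rankQ k m (.node (.call q x) ts)
  | param {i : ℕ} (hi : i < m) : RhsWf rankΔ rankQ k m (.node (.param i) [])

/-- Well-formedness of a tree over `Δ ∪ (Q × T_Σ) ∪ Y`. -/
inductive STWf (rankΓ : Γ → ℕ) (rankΔ : Δ → ℕ) (rankQ : Q → ℕ) : ST Γ Δ Q → Prop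
  | out {d : Δ} {ts : List (ST Γ Δ Q)}
      (hlen : ts.length = rankΔ d) (h : ∀ t ∈ ts, STWf rankΓ rankΔ rankQ t) :
      STWf rankΓ rankΔ rankQ (.node (.out d) ts)
  | call {q : Q} {s : RTree Γ} {ts : List (ST Γ Δ Q)}
      (hs : s.Wf rankΓ) (hlen : ts.length = rankQ q)
      (h : ∀ t ∈ ts, STWf rankΓ rankΔ rankQ t) :
      STWf rankΓ rankΔ rankQ (.node (.call q s) ts)
  | param (i : ℕ) : STWf rankΓ rankΔ rankQ (.node (.param i) [])

/-- A tree over `Δ ∪ (Q × T_Σ) ∪ Y` is parameter-free if no `y_i` occurs in it. -/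
inductive NoParam : ST Γ Δ Q → Prop
  | node {l : SLab Γ Δ Q} {ts : List (ST Γ Δ Q)}
      (hl : ∀ i : ℕ, l ≠ .param i) (h : ∀ t ∈ ts, NoParam t) :
      NoParam (.node l ts)

/-- A macro tree transducer `M = (Q, Σ, Δ, q₀, R)`.  The alphabets `Γ` (input),
`Δ` (output) and the set `Q` of states are ranked; `q₀` has rank `0`; `rules q σ`
is the (finite) set `R_{q,σ}` of right-hand sides of the `⟨q,σ⟩`-rules, and every
right-hand side is a well-formed tree over `Δ ∪ (Q × X_k) ∪ Y_m`. -/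
structure MTT (Γ Δ Q : Type) where
  rankΓ : Γ → ℕ
  rankΔ : Δ → ℕ
  rankQ : Q → ℕ
  q₀ : Q
  q₀_rank : rankQ q₀ = 0
  rules : Q → Γ → Set (Rhs Δ Q)
  rules_fin : ∀ q σ, (rules q σ).Finite
  rules_wf : ∀ q σ, ∀ r ∈ rules q σ, RhsWf rankΔ rankQ (rankΓ σ) (rankQ q) r

/-- The rule selector of a plain mtt. -/
def MTT.sel (M : MTT Γ Δ Q) : Q → Γ → List (RTree Γ) → Set (Rhs Δ Q) :=
  plainSel M.rules

end MttF
namespace MttF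

/-- Input alphabet of `M_sat`: `a` (rank 1), `b` (rank 3), `c` (rank 1), `d` (rank 0). -/
inductive GS : Type | a | b | c | d

def rkGS : GS → ℕ | .a => 1 | .b => 3 | .c => 1 | .d => 0

/-- Output alphabet of `M_sat`: `∧` (rank 2), `∨` (rank 3), `¬` (rank 1),
`v` (rank 1), `e` (rank 0). -/
inductive DS : Type | and | or | not | v | e

def rkDS : DS → ℕ | .and => 2 | .or => 3 | .not => 1 | .v => 1 | .e => 0

/-- States of `M_sat`: `q0` (rank 0), `q` (rank 3, parameters `y_v, y_t, y_f`),
`qc` (rank 2). -/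
inductive QS : Type | q0 | q | qc

def rkQS : QS → ℕ | .q0 => 0 | .q => 3 | .qc => 2

/-- The parameter `y_i` (`y 0 = y_v`, `y 1 = y_t`, `y 2 = y_f`). -/
def yS (i : ℕ) : Rhs DS QS := .node (.param i) []

def oeS : Rhs DS QS := .node (.out .e) []

/-- Either `y_t` (for `true`) or `y_f` (for `false`). -/
def ytf : Bool → Rhs DS QS
  | true => yS 1
  | false => yS 2

/-- The two `⟨q0,a⟩`-rules: `⟨q0, a(x₁)⟩ → ⟨q, x₁⟩(v(e), e, ¬(e))` and
`⟨q0, a(x₁)⟩ → ⟨q, x₁⟩(v(e), ¬(e), e)`. -/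
def q0Rule : Bool → Rhs DS QS
  | true => .node (.call .q 0) [.node (.out .v) [oeS], oeS, .node (.out .not) [oeS]]
  | false => .node (.call .q 0) [.node (.out .v) [oeS], .node (.out .not) [oeS], oeS]

/-- The two `⟨q,b⟩`-rules:
`⟨q, b(x₁,x₂,x₃)⟩(y_v,y_t,y_f) → ⟨q, x₁⟩(v(y_v), ⟨qc,x₂⟩(y_t, y_v), ⟨qc,x₃⟩(y_f, ¬(y_v)))`
and
`⟨q, b(x₁,x₂,x₃)⟩(y_v,y_t,y_f) → ⟨q, x₁⟩(v(y_v), ⟨qc,x₂⟩(y_t, ¬(y_v)), ⟨qc,x₃⟩(y_f, y_v))`. -/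
def qbRule : Bool → Rhs DS QS
  | true => .node (.call .q 0) [.node (.out .v) [yS 0],
      .node (.call .qc 1) [yS 1, yS 0],
      .node (.call .qc 2) [yS 2, .node (.out .not) [yS 0]]]
  | false => .node (.call .q 0) [.node (.out .v) [yS 0],
      .node (.call .qc 1) [yS 1, .node (.out .not) [yS 0]],
      .node (.call .qc 2) [yS 2, yS 0]]

/-- The `⟨q,c⟩`-rule for a literal choice `(z₁,z₂,z₃) ∈ {y_t,y_f}³`:
`⟨q, c(x₁)⟩(y_v,y_t,y_f) → ∧(∨(z₁,z₂,z₃), ⟨q, x₁⟩(y_v,y_t,y_f))`. -/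
def qcRule (b1 b2 b3 : Bool) : Rhs DS QS :=
  .node (.out .and) [.node (.out .or) [ytf b1, ytf b2, ytf b3],
    .node (.call .q 0) [yS 0, yS 1, yS 2]]

/-- The `⟨q,d⟩`-rule for a literal choice: `⟨q, d⟩(y_v,y_t,y_f) → ∨(z₁,z₂,z₃)`. -/
def qdRule (b1 b2 b3 : Bool) : Rhs DS QS :=
  .node (.out .or) [ytf b1, ytf b2, ytf b3]

/-- The rules of `M_sat`; the `⟨q,c⟩`- and `⟨q,d⟩`-rules range over the seven
triples in `{y_t,y_f}³` other than `(y_f,y_f,y_f)`, and the `⟨qc,d⟩`-rules are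
`⟨qc, d⟩(y₁,y₂) → y₁` and `⟨qc, d⟩(y₁,y₂) → y₂`. -/
def rulesSat : QS → GS → Set (Rhs DS QS)
  | .q0, .a => {r | ∃ pos : Bool, r = q0Rule pos}
  | .q, .b => {r | ∃ pos : Bool, r = qbRule pos}
  | .qc, .d => {.node (.param 0) [], .node (.param 1) []}
  | .q, .c => {r | ∃ b1 b2 b3 : Bool, (b1 || b2 || b3) = true ∧ r = qcRule b1 b2 b3}
  | .q, .d => {r | ∃ b1 b2 b3 : Bool, (b1 || b2 || b3) = true ∧ r = qdRule b1 b2 b3}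
  | _, _ => ∅

/-- A literal: `(true, i)` is `p_i` and `(false, i)` is `¬ p_i`. -/
abbrev Lit := Bool × ℕ
/-- A clause: a disjunction of exactly three literals. -/
abbrev Clause := Lit × Lit × Lit
/-- A 3-CNF formula: a (nonempty) list of clauses `C_1 ∧ ⋯ ∧ C_m`. -/
abbrev CNF := List Clause

/-- `φ` is a 3-CNF formula over the variables `p_0, …, p_{n−1}` with exactly
`m` clauses. -/
def goodCNF (n m : ℕ) (φ : CNF) : Prop :=
  φ.length = m ∧ ∀ cl ∈ φ, cl.1.2 < n ∧ cl.2.1.2 < n ∧ cl.2.2.2 < n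

/-- A literal is true under an assignment `α`. -/
def evalLit (α : ℕ → Bool) (l : Lit) : Prop := α l.2 = l.1

/-- Satisfiability of a 3-CNF formula. -/
def Satisfiable (φ : CNF) : Prop :=
  ∃ α : ℕ → Bool, ∀ cl ∈ φ, evalLit α cl.1 ∨ evalLit α cl.2.1 ∨ evalLit α cl.2.2

/-- The encoding `v^i(e)` of the variable `p_i`. -/
def varE : ℕ → RTree DS
  | 0 => .node .e []
  | i+1 => .node .v [varE i]

/-- The encoding of a literal. -/
def litE : Lit → RTree DS
  | (true, i) => varE i
  | (false, i) => .node .not [varE i]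

/-- The encoding `∨(enc l₁, enc l₂, enc l₃)` of a clause. -/
def clauseE : Clause → RTree DS
  | (l1, l2, l3) => .node .or [litE l1, litE l2, litE l3]

/-- The (right-nested) encoding of a 3-CNF formula. -/
def encF : CNF → RTree DS
  | [] => .node .e []
  | [cl] => clauseE cl
  | cl :: cls => .node .and [clauseE cl, encF cls]

/-- `c^k(d)`. -/
def cIter : ℕ → RTree GS
  | 0 => .node .d []
  | k+1 => .node .c [cIter k]

/-- `t_{i+1} = b(t_i, d, d)`. -/
def bIter : ℕ → RTree GS → RTree GS
  | 0, t => t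
  | k+1, t => .node .b [bIter k t, .node .d [], .node .d []]

/-- The input tree `s_{n,m} = a(t_{n−1})` with `t_0 = c^{m−1}(d)` and
`t_{i+1} = b(t_i, d, d)`. -/
def sNM (n m : ℕ) : RTree GS := .node .a [bIter (n-1) (cIter (m-1))]


end MttF

namespace List

variable {α β γ : Type} {R : α → β → Prop} {S : β → γ → Prop}

theorem forall₂_comp_iff {l₁ : List α} {l₃ : List γ} :
    Forall₂ (Relation.Comp R S) l₁ l₃ ↔ Relation.Comp (Forall₂ R) (Forall₂ S) l₁ l₃ := by
  induction l₁ generalizing l₃ with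
  | nil => simp [Relation.Comp]
  | cons a l₁ ih =>
    simp only [forall₂_cons_left_iff, ih, Relation.Comp]
    constructor
    · rintro ⟨c, l₃', ⟨b, hab, hbc⟩, ⟨l₂, h₁, h₂⟩, rfl⟩
      exact ⟨b :: l₂, ⟨b, l₂, hab, h₁, rfl⟩, .cons hbc h₂⟩
    · rintro ⟨_, ⟨b, l₂, hab, h₁, rfl⟩, h⟩
      obtain ⟨c, l₃', hbc, h₂, rfl⟩ := forall₂_cons_left_iff.mp h
      exact ⟨c, l₃', ⟨b, hab, hbc⟩, ⟨l₂, h₁, h₂⟩, rfl⟩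

theorem forall₂_congr_of_mem {R' : α → β → Prop} {l₁ : List α} {l₂ : List β}
    (h : ∀ a ∈ l₁, ∀ b, R a b ↔ R' a b) : Forall₂ R l₁ l₂ ↔ Forall₂ R' l₁ l₂ := by
  induction l₁ generalizing l₂ with
  | nil => simp
  | cons a l₁ ih =>
    simp only [forall₂_cons_left_iff, h a mem_cons_self,
      ih fun a ha => h a (mem_cons_of_mem _ ha)]

theorem forall₂_iff_fin {l₁ : List α} {l₂ : List β} :
    Forall₂ R l₁ l₂ ↔
      ∃ h : l₂.length = l₁.length, ∀ i : Fin l₁.length, R (l₁.get i) (l₂.get (i.cast h.symm)) := by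
  rw [forall₂_iff_get]
  exact ⟨fun h => ⟨h.1.symm, fun i => h.2 i i.2 (h.1 ▸ i.2)⟩,
    fun ⟨h, hR⟩ => ⟨h.symm, fun i h₁ _ => hR ⟨i, h₁⟩⟩⟩

end List

namespace MttF

namespace RTree

variable {α β : Type}

@[elab_as_elim, induction_eliminator]
protected theorem induction {motive : RTree α → Prop}
    (node : ∀ a ts, (∀ t ∈ ts, motive t) → motive (node a ts)) : ∀ t, motive t
  | .node a ts => node a ts fun t _ => RTree.induction node t

@[simp]
theorem map_node (f : α → β) (a : α) (ts : List (RTree α)) :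
    (node a ts).map f = node (f a) (ts.map (map f)) := by
  rw [map]
  simp

theorem map_injective {f : α → β} (hf : Function.Injective f) :
    Function.Injective (map f) := by
  intro t
  induction t with
  | node a ts ih =>
    rintro ⟨b, us⟩ h
    simp only [map_node, node.injEq] at h
    obtain ⟨hab, hts⟩ := h
    have hlen : ts.length = us.length := by simpa using congrArg List.length hts
    refine congrArg₂ node (hf hab) (List.ext_getElem hlen fun i h₁ h₂ => ?_)
    exact ih _ (List.getElem_mem h₁) (by simpa [h₁, h₂] using congrArg (·[i]?) hts)

end RTree

theorem embed_injective {Δ : Type} : Function.Injective (embed : RTree Δ → OT Δ) :=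
  RTree.map_injective fun _ _ h => OLab.out.inj h

@[simp]
theorem substX_node {Γ Δ Q : Type} (ss : List (RTree Γ)) (l : RLab Δ Q) (ts : List (Rhs Δ Q)) :
    substX ss (.node l ts) = .node (l.subst ss) (ts.map (substX ss)) := by
  simp [substX]

section Semantics

variable {Γ Δ Q : Type} {rsel : Q → Γ → List (RTree Γ) → Set (Rhs Δ Q)}

variable (rsel) in
/-- `⟦u⟧_OI`. -/
def sem (u : ST Γ Δ Q) : Set (OT Δ) := {t | SemOI rsel u t}

/-- `δ(L₁, …, Lₙ)`. -/
def outSet (d : Δ) (Ls : List (Set (OT Δ))) : Set (OT Δ) :=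
  {t | ∃ ts, List.Forall₂ (fun L t => t ∈ L) Ls ts ∧ t = .node (.out d) ts}

/-- `OISub` with the arguments given by their sets of values. -/
inductive OISubst (Ls : List (Set (OT Δ))) : OT Δ → OT Δ → Prop
  | param {i : ℕ} {t : OT Δ} (h : i < Ls.length) (ht : t ∈ Ls[i]) :
      OISubst Ls (.node (.param i) []) t
  | out {d : Δ} {ts ts' : List (OT Δ)} (h : List.Forall₂ (OISubst Ls) ts ts') :
      OISubst Ls (.node (.out d) ts) (.node (.out d) ts')

/-- `L ←_OI (L₁, …, Lₙ)`. -/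
def oiSubst (L : Set (OT Δ)) (Ls : List (Set (OT Δ))) : Set (OT Δ) :=
  {t | ∃ w ∈ L, OISubst Ls w t}

theorem oiSub_iff_oiSubst {us : List (ST Γ Δ Q)} {t₀ t : OT Δ} :
    OISub rsel us t₀ t ↔ OISubst (us.map (sem rsel)) t₀ t := by
  induction t₀ using RTree.induction generalizing t with
  | node a ts ih =>
    have hts := List.forall₂_congr_of_mem (l₂ := t.children) fun u hu v => @ih u hu v
    constructor
    · intro h
      cases h with
      | param h hsem => exact .param (by simpa using h) (by simpa [sem] using hsem)
      | out hlen h => exact .out (hts.mp (List.forall₂_iff_fin.mpr ⟨hlen, h⟩))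
    · intro h
      cases h with
      | param h ht => exact .param (by simpa using h) (by simpa [sem] using ht)
      | out h =>
        obtain ⟨hlen, h⟩ := List.forall₂_iff_fin.mp (hts.mpr h)
        exact .out hlen h

theorem semOI_out_iff {d : Δ} {us : List (ST Γ Δ Q)} {t : OT Δ} :
    SemOI rsel (.node (.out d) us) t ↔
      ∃ ts, List.Forall₂ (SemOI rsel) us ts ∧ t = .node (.out d) ts := by
  constructor
  · rintro (_ | ⟨hlen, h⟩)
    exact ⟨_, List.forall₂_iff_fin.mpr ⟨hlen, h⟩, rfl⟩
  · rintro ⟨ts, h, rfl⟩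
    obtain ⟨hlen, h⟩ := List.forall₂_iff_fin.mp h
    exact .out hlen h

theorem sem_out (d : Δ) (us : List (ST Γ Δ Q)) :
    sem rsel (.node (.out d) us) = outSet d (us.map (sem rsel)) := by
  ext t
  simp [sem, outSet, semOI_out_iff]

theorem sem_param (i : ℕ) :
    sem rsel (.node (.param i) ([] : List (ST Γ Δ Q))) = {.node (.param i) []} := by
  ext t
  exact ⟨fun h => by cases h; rfl, by rintro rfl; exact .param i⟩

theorem sem_call (q : Q) (σ : Γ) (ss : List (RTree Γ)) (us : List (ST Γ Δ Q)) :
    sem rsel (.node (.call q (.node σ ss)) us) =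
      ⋃ r ∈ rsel q σ ss, oiSubst (sem rsel (substX ss r)) (us.map (sem rsel)) := by
  ext t
  simp only [sem, Set.mem_ofPred_eq, Set.mem_iUnion, oiSubst, ← oiSub_iff_oiSubst]
  constructor
  · rintro (_ | _ | ⟨hr, h₀, hs⟩)
    exact ⟨_, hr, _, h₀, hs⟩
  · rintro ⟨r, hr, t₀, h₀, hs⟩
    exact .call hr h₀ hs

theorem oiSubst_out_iff {Ls : List (Set (OT Δ))} {d : Δ} {ts : List (OT Δ)} {t : OT Δ} :
    OISubst Ls (.node (.out d) ts) t ↔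
      ∃ ts', List.Forall₂ (OISubst Ls) ts ts' ∧ t = .node (.out d) ts' :=
  ⟨fun | .out h => ⟨_, h, rfl⟩, fun ⟨_, h, ht⟩ => ht ▸ .out h⟩

theorem oiSubst_union (A B : Set (OT Δ)) (Ls : List (Set (OT Δ))) :
    oiSubst (A ∪ B) Ls = oiSubst A Ls ∪ oiSubst B Ls := by
  ext t
  simp only [oiSubst, Set.mem_union, Set.mem_ofPred_eq, or_and_right, exists_or]

theorem oiSubst_iUnion {ι : Sort*} (A : ι → Set (OT Δ)) (Ls : List (Set (OT Δ))) :
    oiSubst (⋃ i, A i) Ls = ⋃ i, oiSubst (A i) Ls := by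
  ext t
  simp only [oiSubst, Set.mem_iUnion, Set.mem_ofPred_eq]
  exact ⟨fun ⟨w, ⟨i, hw⟩, h⟩ => ⟨i, w, hw, h⟩, fun ⟨i, w, hw, h⟩ => ⟨w, ⟨i, hw⟩, h⟩⟩

theorem oiSubst_param (i : ℕ) (Ls : List (Set (OT Δ))) :
    oiSubst {.node (.param i) []} Ls = Ls[i]?.getD ∅ := by
  ext t
  simp only [oiSubst, Set.mem_singleton_iff, exists_eq_left, Set.mem_ofPred_eq]
  constructor
  · rintro ⟨h, ht⟩
    simpa [h] using ht
  · intro ht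
    by_cases h : i < Ls.length
    · exact .param h (by simpa [h] using ht)
    · simp [h] at ht

theorem oiSubst_outSet (d : Δ) (As Ls : List (Set (OT Δ))) :
    oiSubst (outSet d As) Ls = outSet d (As.map (oiSubst · Ls)) := by
  ext t
  simp only [oiSubst, outSet, Set.mem_ofPred_eq, List.forall₂_map_left_iff]
  constructor
  · rintro ⟨_, ⟨ws, hws, rfl⟩, h⟩
    obtain ⟨ts', hts', rfl⟩ := oiSubst_out_iff.mp h
    exact ⟨ts', List.forall₂_comp_iff.mpr ⟨ws, hws, hts'⟩, rfl⟩
  · rintro ⟨ts', h, rfl⟩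
    obtain ⟨ws, hws, hts'⟩ := List.forall₂_comp_iff.mp h
    exact ⟨_, ⟨ws, hws, rfl⟩, .out hts'⟩

theorem outSet_cons_iUnion {ι : Sort*} (d : Δ) (A : ι → Set (OT Δ))
    (As : List (Set (OT Δ))) : outSet d ((⋃ i, A i) :: As) = ⋃ i, outSet d (A i :: As) := by
  ext t
  simp only [outSet, List.forall₂_cons_left_iff, Set.mem_iUnion, Set.mem_ofPred_eq]
  constructor
  · rintro ⟨_, ⟨a, ts, ⟨i, ha⟩, hts, rfl⟩, rfl⟩
    exact ⟨i, _, ⟨a, ts, ha, hts, rfl⟩, rfl⟩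
  · rintro ⟨i, _, ⟨a, ts, ha, hts, rfl⟩, rfl⟩
    exact ⟨_, ⟨a, ts, ⟨i, ha⟩, hts, rfl⟩, rfl⟩

theorem outSet_singleton (d : Δ) (t : OT Δ) :
    outSet d [{t}] = {.node (.out d) [t]} := by
  ext; simp [outSet, List.forall₂_cons_left_iff]

theorem outSet_nil (d : Δ) : outSet d [] = {.node (.out d) []} := by
  ext; simp [outSet]

theorem mem_outSet_pair {d : Δ} {A B : Set (OT Δ)} {t : OT Δ} :
    t ∈ outSet d [A, B] ↔ ∃ a ∈ A, ∃ b ∈ B, t = .node (.out d) [a, b] := by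
  simp [outSet, List.forall₂_cons_left_iff, and_assoc]

theorem mem_outSet_triple {d : Δ} {A B C : Set (OT Δ)} {t : OT Δ} :
    t ∈ outSet d [A, B, C] ↔ ∃ a ∈ A, ∃ b ∈ B, ∃ c ∈ C, t = .node (.out d) [a, b, c] := by
  simp [outSet, List.forall₂_cons_left_iff, and_assoc]

end Semantics

local notation "⟦" u "⟧ₒᵢ" => sem (plainSel rulesSat) u

section Msat

def vPow (i : ℕ) (U : Set (OT DS)) : Set (OT DS) := (fun U => outSet .v [U])^[i] U

def litImg (b : Bool) (i : ℕ) (U : Set (OT DS)) : Set (OT DS) :=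
  bif b then vPow i U else outSet .not [vPow i U]

/-- With `U` the value of `y_v`, i.e. the encoding of the current variable, this is the set of
literals of the next `j` variables that the assignment `α` makes true. -/
def litSet (α : ℕ → Bool) (j : ℕ) (U : Set (OT DS)) : Set (OT DS) :=
  ⋃ i < j, litImg (α i) i U

def clauseSet (T F : Set (OT DS)) : Set (OT DS) :=
  ⋃ (b₁ : Bool) (b₂ : Bool) (b₃ : Bool) (_ : (b₁ || b₂ || b₃) = true),
    outSet .or [cond b₁ T F, cond b₂ T F, cond b₃ T F]

def chainSet (C : Set (OT DS)) : ℕ → Set (OT DS)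
  | 0 => C
  | k + 1 => outSet .and [C, chainSet C k]

theorem litSet_zero (α : ℕ → Bool) (U : Set (OT DS)) : litSet α 0 U = ∅ := by
  simp [litSet]

theorem litSet_succ (α : ℕ → Bool) (j : ℕ) (U : Set (OT DS)) :
    litSet α (j + 1) U = litImg (α 0) 0 U ∪ litSet (fun i => α (i + 1)) j (outSet .v [U]) := by
  simp only [litSet, Set.biUnion_lt_succ', litImg, vPow, Function.iterate_succ_apply]

theorem iUnion_litSet_succ {β : Type} (H : Set (OT DS) → Set (OT DS) → Set β) (j : ℕ)
    (U : Set (OT DS)) :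
    ⋃ α : ℕ → Bool, H (litSet α (j + 1) U) (litSet (fun i => !α i) (j + 1) U) =
      ⋃ (b : Bool) (α : ℕ → Bool), H (litImg b 0 U ∪ litSet α j (outSet .v [U]))
        (litImg (!b) 0 U ∪ litSet (fun i => !α i) j (outSet .v [U])) := by
  simp only [litSet_succ]
  ext t
  simp only [Set.mem_iUnion]
  constructor
  · rintro ⟨α, h⟩
    exact ⟨α 0, fun i => α (i + 1), h⟩
  · rintro ⟨b, α, h⟩
    -- the assignment `b, α 0, α 1, …`
    exact ⟨fun i => Nat.rec b (fun i _ => α i) i, h⟩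

theorem mem_clauseSet {T F : Set (OT DS)} {t : OT DS} :
    t ∈ clauseSet T F ↔ ∃ b₁ b₂ b₃ : Bool, (b₁ || b₂ || b₃) = true ∧
      ∃ t₁ ∈ cond b₁ T F, ∃ t₂ ∈ cond b₂ T F, ∃ t₃ ∈ cond b₃ T F,
        t = .node (.out .or) [t₁, t₂, t₃] := by
  simp only [clauseSet, Set.mem_iUnion, exists_prop, mem_outSet_triple]

theorem chainSet_succ_clauseSet (T F : Set (OT DS)) (k : ℕ) :
    chainSet (clauseSet T F) (k + 1) =
      ⋃ (b₁ : Bool) (b₂ : Bool) (b₃ : Bool) (_ : (b₁ || b₂ || b₃) = true),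
        outSet .and [outSet .or [cond b₁ T F, cond b₂ T F, cond b₃ T F],
          chainSet (clauseSet T F) k] := by
  simp only [chainSet, clauseSet, outSet_cons_iUnion]

section Substitution

variable (Ls : List (Set (OT DS)))

theorem oiSubst_vPow (i : ℕ) (U : Set (OT DS)) :
    oiSubst (vPow i U) Ls = vPow i (oiSubst U Ls) := by
  induction i with
  | zero => rfl
  | succ i ih =>
    simp only [vPow, Function.iterate_succ_apply'] at ih ⊢
    simp [oiSubst_outSet, ih]

theorem oiSubst_litImg (b : Bool) (i : ℕ) (U : Set (OT DS)) :
    oiSubst (litImg b i U) Ls = litImg b i (oiSubst U Ls) := by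
  cases b <;> simp [litImg, oiSubst_outSet, oiSubst_vPow]

theorem oiSubst_litSet (α : ℕ → Bool) (j : ℕ) (U : Set (OT DS)) :
    oiSubst (litSet α j U) Ls = litSet α j (oiSubst U Ls) := by
  simp [litSet, oiSubst_iUnion, oiSubst_litImg]

theorem oiSubst_clauseSet (T F : Set (OT DS)) :
    oiSubst (clauseSet T F) Ls = clauseSet (oiSubst T Ls) (oiSubst F Ls) := by
  simp [clauseSet, oiSubst_iUnion, oiSubst_outSet, Bool.apply_cond (oiSubst · Ls)]

theorem oiSubst_chainSet (C : Set (OT DS)) (k : ℕ) :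
    oiSubst (chainSet C k) Ls = chainSet (oiSubst C Ls) k := by
  induction k with
  | zero => rfl
  | succ k ih => simp [chainSet, oiSubst_outSet, ih]

end Substitution

theorem sem_qc_d (u₁ u₂ : ST GS DS QS) :
    ⟦.node (.call .qc (.node .d [])) [u₁, u₂]⟧ₒᵢ = ⟦u₁⟧ₒᵢ ∪ ⟦u₂⟧ₒᵢ := by
  simp [sem_call, plainSel, rulesSat, RLab.subst, sem_param, oiSubst_param]

theorem oiSubst_sem_ytf (b : Bool) (ss : List (RTree GS)) (U₀ U₁ U₂ : Set (OT DS)) :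
    oiSubst ⟦substX ss (ytf b)⟧ₒᵢ [U₀, U₁, U₂] = cond b U₁ U₂ := by
  cases b <;> simp [ytf, yS, RLab.subst, sem_param, oiSubst_param]

theorem sem_q_cIter (k : ℕ) (u₀ u₁ u₂ : ST GS DS QS) :
    ⟦.node (.call .q (cIter k)) [u₀, u₁, u₂]⟧ₒᵢ = chainSet (clauseSet ⟦u₁⟧ₒᵢ ⟦u₂⟧ₒᵢ) k := by
  induction k generalizing u₀ u₁ u₂ with
  | zero =>
    simp only [cIter, sem_call, plainSel, rulesSat, ← exists_prop, Set.ofPred_exists,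
      Set.ofPred_eq_eq_singleton, Set.biUnion_iUnion, Set.biUnion_singleton]
    simp [qdRule, RLab.subst, sem_out, oiSubst_outSet, oiSubst_sem_ytf, clauseSet, chainSet]
  | succ k ih =>
    rw [chainSet_succ_clauseSet]
    simp only [cIter, sem_call, plainSel, rulesSat, ← exists_prop, Set.ofPred_exists,
      Set.ofPred_eq_eq_singleton, Set.biUnion_iUnion, Set.biUnion_singleton]
    simp [qcRule, RLab.subst, yS, sem_out, sem_param, ih, oiSubst_outSet, oiSubst_sem_ytf,
      oiSubst_chainSet, oiSubst_clauseSet, oiSubst_param]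

theorem sem_q_bIter (j k : ℕ) (u₀ u₁ u₂ : ST GS DS QS) :
    ⟦.node (.call .q (bIter j (cIter k))) [u₀, u₁, u₂]⟧ₒᵢ =
      ⋃ α : ℕ → Bool, chainSet (clauseSet (⟦u₁⟧ₒᵢ ∪ litSet α j ⟦u₀⟧ₒᵢ)
        (⟦u₂⟧ₒᵢ ∪ litSet (fun i => !α i) j ⟦u₀⟧ₒᵢ)) k := by
  induction j generalizing u₀ u₁ u₂ with
  | zero => simp [bIter, litSet_zero, sem_q_cIter, Set.iUnion_const]
  | succ j ih =>
    rw [iUnion_litSet_succ (fun X Y => chainSet (clauseSet (⟦u₁⟧ₒᵢ ∪ X) (⟦u₂⟧ₒᵢ ∪ Y)) k)]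
    simp only [bIter, sem_call, plainSel, rulesSat, Set.ofPred_exists,
      Set.ofPred_eq_eq_singleton, Set.biUnion_iUnion, Set.biUnion_singleton]
    congr! 2 with pos
    cases pos <;> simp [qbRule, RLab.subst, yS, sem_out, sem_param, sem_qc_d, ih, litImg, vPow,
      oiSubst_iUnion, oiSubst_union, oiSubst_outSet, oiSubst_chainSet, oiSubst_clauseSet,
      oiSubst_litSet, oiSubst_param, Set.union_assoc, -Set.singleton_union, -Set.union_singleton]

theorem sem_q0_sNM (n m : ℕ) (hn : 1 ≤ n) :
    ⟦.node (.call .q0 (sNM n m)) []⟧ₒᵢ =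
      ⋃ α : ℕ → Bool, chainSet (clauseSet (litSet α n (outSet .e []))
        (litSet (fun i => !α i) n (outSet .e []))) (m - 1) := by
  obtain ⟨j, rfl⟩ : ∃ j, n = j + 1 := ⟨n - 1, by omega⟩
  -- the `a`-rules act as the `b`-rules would on `y_v = e` with empty pools
  rw [iUnion_litSet_succ (fun X Y => chainSet (clauseSet X Y) (m - 1))]
  simp only [sNM, Nat.add_sub_cancel, sem_call, plainSel, rulesSat, Set.ofPred_exists,
    Set.ofPred_eq_eq_singleton, Set.biUnion_iUnion, Set.biUnion_singleton]
  congr! 2 with pos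
  cases pos <;> simp [q0Rule, oeS, RLab.subst, sem_out, sem_q_bIter, oiSubst_iUnion, oiSubst_union,
    oiSubst_outSet, oiSubst_chainSet, oiSubst_clauseSet, oiSubst_litSet, litImg, vPow]

theorem vPow_outSet_e (i : ℕ) : vPow i (outSet .e []) = {embed (varE i)} := by
  induction i with
  | zero => simp [vPow, outSet_nil, varE, embed]
  | succ i ih =>
    simp only [vPow, Function.iterate_succ_apply'] at ih ⊢
    simp [ih, outSet_singleton, varE, embed]

theorem litImg_outSet_e (b : Bool) (i : ℕ) :
    litImg b i (outSet .e []) = {embed (litE (b, i))} := by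
  cases b <;> simp [litImg, vPow_outSet_e, litE, outSet_singleton, embed]

theorem litSet_outSet_e (β : ℕ → Bool) (n : ℕ) :
    litSet β n (outSet .e []) = (fun i => embed (litE (β i, i))) '' Set.Iio n := by
  ext t
  simp [litSet, litImg_outSet_e, eq_comm]

theorem mem_cond_litSet_outSet_e {α : ℕ → Bool} {n : ℕ} {b : Bool} {t : OT DS} :
    t ∈ cond b (litSet α n (outSet .e [])) (litSet (fun i => !α i) n (outSet .e [])) ↔
      ∃ l : Lit, l.2 < n ∧ (evalLit α l ↔ b = true) ∧ t = embed (litE l) := by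
  rw [litSet_outSet_e, litSet_outSet_e]
  constructor
  · intro h
    cases b
    · obtain ⟨i, hi, rfl⟩ := h
      exact ⟨(!α i, i), hi, by simp [evalLit], rfl⟩
    · obtain ⟨i, hi, rfl⟩ := h
      exact ⟨(α i, i), hi, by simp [evalLit], rfl⟩
  · rintro ⟨⟨c, i⟩, hi, hc, rfl⟩
    have hc : c = cond b (α i) (!α i) := by
      cases b <;> cases c <;> cases h : α i <;> simp_all [evalLit]
    cases b <;> exact ⟨i, hi, by rw [hc]; rfl⟩

def satClauses (α : ℕ → Bool) (n : ℕ) : Set Clause :=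
  {cl | (cl.1.2 < n ∧ cl.2.1.2 < n ∧ cl.2.2.2 < n) ∧
    (evalLit α cl.1 ∨ evalLit α cl.2.1 ∨ evalLit α cl.2.2)}

theorem clauseSet_litSet_outSet_e (α : ℕ → Bool) (n : ℕ) :
    clauseSet (litSet α n (outSet .e [])) (litSet (fun i => !α i) n (outSet .e [])) =
      (fun cl => embed (clauseE cl)) '' satClauses α n := by
  ext t
  simp only [mem_clauseSet, mem_cond_litSet_outSet_e, Set.mem_image]
  constructor
  · rintro ⟨b₁, b₂, b₃, hb, _, ⟨l₁, h₁, e₁, rfl⟩, _, ⟨l₂, h₂, e₂, rfl⟩, _, ⟨l₃, h₃, e₃, rfl⟩, rfl⟩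
    refine ⟨(l₁, l₂, l₃), ⟨⟨h₁, h₂, h₃⟩, ?_⟩, by simp [clauseE, embed]⟩
    cases b₁ <;> cases b₂ <;> cases b₃ <;> simp_all
  · rintro ⟨⟨l₁, l₂, l₃⟩, ⟨⟨h₁, h₂, h₃⟩, hsat⟩, rfl⟩
    refine ⟨decide (α l₁.2 = l₁.1), decide (α l₂.2 = l₂.1), decide (α l₃.2 = l₃.1),
      by simpa [evalLit, or_assoc] using hsat, _, ⟨l₁, h₁, by simp [evalLit], rfl⟩,
      _, ⟨l₂, h₂, by simp [evalLit], rfl⟩, _, ⟨l₃, h₃, by simp [evalLit], rfl⟩,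
      by simp [clauseE, embed]⟩

theorem encF_cons (cl : Clause) {φ : CNF} (hφ : φ ≠ []) :
    encF (cl :: φ) = .node .and [clauseE cl, encF φ] := by
  cases φ with
  | nil => contradiction
  | cons _ _ => rfl

theorem chainSet_image_clauseE (C : Set Clause) (k : ℕ) :
    chainSet ((fun cl => embed (clauseE cl)) '' C) k =
      (fun φ => embed (encF φ)) '' {φ | φ.length = k + 1 ∧ ∀ cl ∈ φ, cl ∈ C} := by
  induction k with
  | zero =>
    ext t
    simp only [chainSet, Set.mem_image, Set.mem_ofPred_eq, zero_add, List.length_eq_one_iff]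
    constructor
    · rintro ⟨cl, hcl, rfl⟩
      exact ⟨[cl], ⟨⟨cl, rfl⟩, List.forall_mem_singleton.mpr hcl⟩, rfl⟩
    · rintro ⟨_, ⟨⟨cl, rfl⟩, hcl⟩, rfl⟩
      exact ⟨cl, List.forall_mem_singleton.mp hcl, rfl⟩
  | succ k ih =>
    ext t
    simp only [chainSet, mem_outSet_pair, ih, Set.mem_image, Set.mem_ofPred_eq]
    constructor
    · rintro ⟨_, ⟨cl, hcl, rfl⟩, _, ⟨φ, ⟨hlen, hφ⟩, rfl⟩, rfl⟩
      refine ⟨cl :: φ, ⟨by simp [hlen], List.forall_mem_cons.mpr ⟨hcl, hφ⟩⟩, ?_⟩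
      simp [encF_cons cl (List.ne_nil_of_length_eq_add_one hlen), embed]
    · rintro ⟨_ | ⟨cl, φ⟩, ⟨hlen, hφ⟩, rfl⟩
      · simp at hlen
      · obtain ⟨hcl, hφ⟩ := List.forall_mem_cons.mp hφ
        have hlen : φ.length = k + 1 := by simpa using hlen
        refine ⟨_, ⟨cl, hcl, rfl⟩, _, ⟨φ, ⟨hlen, hφ⟩, rfl⟩, ?_⟩
        simp [encF_cons cl (List.ne_nil_of_length_eq_add_one hlen), embed]

end Msat

/-- For all `n ≥ 1` and `m ≥ 1`, the set `⟦⟨q0, s_{n,m}⟩⟧_OI` of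
outputs of the mtt `M_sat` in OI-mode on input `s_{n,m}` equals the set
`{ enc(φ) | φ a satisfiable 3-CNF formula over `p_0,…,p_{n−1}` with exactly `m` clauses }`. -/
theorem oi_outputs_of_Msat (n m : ℕ) (hn : 1 ≤ n) (hm : 1 ≤ m) :
    {t : RTree DS | SemOI (plainSel rulesSat) (.node (.call .q0 (sNM n m)) []) (embed t)}
      = {t | ∃ φ : CNF, goodCNF n m φ ∧ Satisfiable φ ∧ t = encF φ} := by
  have hsem : ⟦.node (.call .q0 (sNM n m)) []⟧ₒᵢ =
      ⋃ α, (fun φ => embed (encF φ)) '' {φ | φ.length = m ∧ ∀ cl ∈ φ, cl ∈ satClauses α n} := by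
    simp only [sem_q0_sNM n m hn, clauseSet_litSet_outSet_e, chainSet_image_clauseE,
      Nat.sub_add_cancel hm]
  ext t
  change embed t ∈ ⟦_⟧ₒᵢ ↔ _
  simp only [hsem, Set.mem_iUnion, Set.mem_image, embed_injective.eq_iff, Set.mem_ofPred_eq,
    goodCNF, Satisfiable, satClauses]
  constructor
  · rintro ⟨α, φ, ⟨hlen, hφ⟩, rfl⟩
    exact ⟨φ, ⟨hlen, fun cl h => (hφ cl h).1⟩, ⟨α, fun cl h => (hφ cl h).2⟩, rfl⟩
  · rintro ⟨φ, ⟨hlen, hvars⟩, ⟨α, hsat⟩, rfl⟩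
    exact ⟨α, φ, ⟨hlen, fun cl h => ⟨hvars cl h, hsat cl h⟩⟩, rfl⟩

end MttF
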